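/- (Lemma 4, time-asynchronous case, both directions.) For positive integers L, M, D with L ≥ 6 and M ≥ 1, set P = L + D and define F₂(D) = (D+1)·(8P² + 8PM + 10P + 6M − 5) and F₃(D) = 10P²·log₂P + 90P² + 20P·log₂P + 16PM + 6P. Then: (i) if D < (78 − 12L − 10M + √((12L + 10M − 78)² + 48(78L + 6M)))/24, then F₂(D) < F₃(D); and (ii) if D > (26 + 5·log₂L)/(2 − (5/6)·log₂e), then F₂(D) > F₃(D). -/

import Mathlib

/-!
(i) With `P = L + D`, the bound on `D` says `12 D² + (12 L + 10 M - 78) D < 78 L + 6 M`, i.e.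
`(12 P + 10 M)(D + 1) < 90 P + 16 M`. As `F₂` is `D + 1` times a positive polynomial
and `F₃ ≥ 90 P² + 16 P M + 6 P` (because `log₂ P ≥ 0`), a polynomial comparison gives
`F₂ < F₃`.

(ii) `log (L + D) ≤ log L + D / L ≤ log L + D / 6`, so the bound on `D` gives
`5 log₂ P < 2 D - 26`. Substituting this into `F₃` leaves a polynomial that `F₂` dominates,
since the bound also forces `D > 13`.
-/

open Real

theorem mul_sq_add_mul_lt_of_lt_largerRoot {a b c x : ℝ} (ha : 0 < a) (hc : 0 < c) (hx : 0 ≤ x)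
    (h : x < (-b + √(b ^ 2 + 4 * a * c)) / (2 * a)) : a * x ^ 2 + b * x < c := by
  have hlt : 2 * a * x + b < √(b ^ 2 + 4 * a * c) := by
    rw [lt_div_iff₀ (by positivity)] at h
    linarith
  rcases le_or_gt (2 * a * x + b) 0 with hneg | hpos
  · nlinarith [mul_nonneg hx (neg_nonneg.2 hneg), sq_nonneg x]
  · have hsq := (lt_sqrt hpos.le).1 hlt
    nlinarith

theorem logb_add_le_logb_add_div_mul_logb_exp_one {b x y : ℝ} (hb : 1 < b) (hx : 0 < x)
    (hy : 0 ≤ y) : logb b (x + y) ≤ logb b x + y / x * logb b (exp 1) := by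
  have hlog : log (x + y) ≤ log x + y / x := by
    have h := log_le_sub_one_of_pos (div_pos (by positivity : 0 < x + y) hx)
    rw [log_div (by positivity) hx.ne', add_div, div_self hx.ne'] at h
    linarith
  calc logb b (x + y) = log (x + y) / log b := rfl
    _ ≤ (log x + y / x) / log b := by gcongr; exact log_nonneg hb.le
    _ = logb b x + y / x * logb b (exp 1) := by rw [logb, logb, log_exp]; ring

theorem logb_two_exp_one_lt : logb 2 (exp 1) < 3 / 2 := by
  rw [logb, log_exp, div_lt_iff₀ (log_pos one_lt_two)]
  linarith [log_two_gt_d9]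

/-- `F₂`, written in terms of `P = L + D`. -/
noncomputable def flopsDirect (P M D : ℝ) : ℝ :=
  (D + 1) * (8 * P ^ 2 + 8 * P * M + 10 * P + 6 * M - 5)

/-- `F₃`, written in terms of `P = L + D`. -/
noncomputable def flopsFFT (P M : ℝ) : ℝ :=
  10 * P ^ 2 * logb 2 P + 90 * P ^ 2 + 20 * P * logb 2 P + 16 * P * M + 6 * P

section Flops

variable {P M D : ℝ}

theorem flopsDirect_lt_flopsFFT (hP : 3 ≤ P) (hM : 0 ≤ M)
    (h : 12 * D * P + 10 * D * M < 78 * P + 6 * M) : flopsDirect P M D < flopsFFT P M := by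
  have hlog : 0 ≤ logb 2 P := logb_nonneg one_lt_two (by linarith)
  have hFFT : 90 * P ^ 2 + 16 * P * M + 6 * P ≤ flopsFFT P M := by
    unfold flopsFFT
    nlinarith [mul_nonneg (sq_nonneg P) hlog]
  have hQ : 0 < 8 * P ^ 2 + 8 * P * M + 10 * P + 6 * M - 5 := by nlinarith
  have hweight : (12 * P + 10 * M) * (D + 1) < 90 * P + 16 * M := by linarith
  have hpoly : (90 * P + 16 * M) * (8 * P ^ 2 + 8 * P * M + 10 * P + 6 * M - 5) ≤
      (12 * P + 10 * M) * (90 * P ^ 2 + 16 * P * M + 6 * P) := by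
    nlinarith [mul_nonneg (sq_nonneg P) hM, mul_nonneg (sq_nonneg M) (by linarith : 0 ≤ P - 3),
      mul_nonneg (mul_nonneg hM (by linarith : 0 ≤ P)) (by linarith : 0 ≤ P - 3)]
  have hpos : 0 < 12 * P + 10 * M := by linarith
  refine lt_of_mul_lt_mul_left ?_ hpos.le
  calc (12 * P + 10 * M) * flopsDirect P M D
      = (12 * P + 10 * M) * (D + 1) * (8 * P ^ 2 + 8 * P * M + 10 * P + 6 * M - 5) := by
        unfold flopsDirect; ring
    _ < (90 * P + 16 * M) * (8 * P ^ 2 + 8 * P * M + 10 * P + 6 * M - 5) :=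
        mul_lt_mul_of_pos_right hweight hQ
    _ ≤ (12 * P + 10 * M) * flopsFFT P M := hpoly.trans (by gcongr)

theorem flopsFFT_lt_flopsDirect (hP : 3 ≤ P) (hM : 0 ≤ M) (h : 5 * logb 2 P < 2 * D - 26) :
    flopsFFT P M < flopsDirect P M D := by
  have hlog : 0 ≤ logb 2 P := logb_nonneg one_lt_two (by linarith)
  have hD : 13 < D := by linarith
  have hFFT : flopsFFT P M <
      (2 * P ^ 2 + 4 * P) * (2 * D - 26) + 90 * P ^ 2 + 16 * P * M + 6 * P := by
    have : (10 * P ^ 2 + 20 * P) * logb 2 P < (10 * P ^ 2 + 20 * P) * ((2 * D - 26) / 5) :=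
      mul_lt_mul_of_pos_left (by linarith) (by positivity)
    unfold flopsFFT
    linarith
  refine hFFT.trans_le ?_
  unfold flopsDirect
  nlinarith [mul_nonneg (by linarith : 0 ≤ D - 13) (sq_nonneg P),
    mul_nonneg (mul_nonneg (by linarith : 0 ≤ D - 1) (by linarith : 0 ≤ P)) hM,
    mul_nonneg (by linarith : 0 ≤ D) (by linarith : 0 ≤ P - 3),
    mul_nonneg (by linarith : 0 ≤ D) hM]

end Flops

theorem stmt_16 (L M D : ℕ) (hL : 6 ≤ L) :
    let P : ℝ := (L : ℝ) + (D : ℝ)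
    let F2 : ℝ := ((D : ℝ) + 1) * (8 * P ^ 2 + 8 * P * (M : ℝ) + 10 * P + 6 * (M : ℝ) - 5)
    let F3 : ℝ := 10 * P ^ 2 * Real.logb 2 P + 90 * P ^ 2 + 20 * P * Real.logb 2 P +
      16 * P * (M : ℝ) + 6 * P
    ((D : ℝ) <
        (78 - 12 * (L : ℝ) - 10 * (M : ℝ) +
            Real.sqrt ((12 * (L : ℝ) + 10 * (M : ℝ) - 78) ^ 2 +
              48 * (78 * (L : ℝ) + 6 * (M : ℝ)))) / 24 →
      F2 < F3) ∧
    ((D : ℝ) > (26 + 5 * Real.logb 2 (L : ℝ)) / (2 - 5 / 6 * Real.logb 2 (Real.exp 1)) →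
      F2 > F3) := by
  intro P F2 F3
  have hL' : (6 : ℝ) ≤ L := by exact_mod_cast hL
  have hM : (0 : ℝ) ≤ M := M.cast_nonneg
  have hD : (0 : ℝ) ≤ D := D.cast_nonneg
  have hP : (3 : ℝ) ≤ P := by simp only [P]; linarith
  constructor
  · intro hroot
    have hquad := mul_sq_add_mul_lt_of_lt_largerRoot (a := 12) (b := 12 * L + 10 * M - 78)
      (c := 78 * L + 6 * M) (by norm_num) (by positivity) hD (by convert hroot using 4 <;> ring)
    exact flopsDirect_lt_flopsFFT hP hM (by simp only [P]; linarith)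
  · intro hbound
    have hden : 0 < 2 - 5 / 6 * logb 2 (exp 1) := by linarith [logb_two_exp_one_lt]
    have hL6 : (D : ℝ) / L ≤ D / 6 := div_le_div_of_nonneg_left hD (by norm_num) hL'
    have he : 0 ≤ logb 2 (exp 1) := logb_nonneg one_lt_two (one_le_exp zero_le_one)
    have hlogP : logb 2 P ≤ logb 2 L + D / L * logb 2 (exp 1) :=
      logb_add_le_logb_add_div_mul_logb_exp_one one_lt_two (by positivity) hD
    rw [gt_iff_lt, div_lt_iff₀ hden] at hbound
    exact flopsFFT_lt_flopsDirect hP hM (by nlinarith [mul_le_mul_of_nonneg_right hL6 he])
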